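/- arXiv:1007.1410 — 3 statements merged into one kernel-verified Lean document; each statement's English description precedes it below -/
import Mathlib

section
/- Let λ > 0, let t > 1 be real, and let K be a positive integer with K ≥ λ(1+t). Then Po(λ)([K,∞)) ≤ ((t+1)/t) · λ^K · e^{K−λ} / (√(2πK) · K^K). -/
open Real

/-- The upper tail `Po(λ)([K,∞)) = Σ_{j≥K} e^{−λ} λ^j / j!` of the Poisson
distribution with parameter `λ`. -/
noncomputable def poissonTail (lam : ℝ) (K : ℕ) : ℝ :=
  ∑' j : ℕ, Real.exp (-lam) * lam ^ (K + j) / (Nat.factorial (K + j))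

/-!
Since `(K + j)! ≥ K! (K + 1)^j`, the tail `Po(λ)([K,∞))` is dominated by the geometric series
`e^{−λ} λ^K / K! · Σ_j (λ / (K + 1))^j`, whose ratio is at most `1 / (1 + t)`, so its sum is at
most `(t + 1) / t` times its first term. The first term is bounded by Stirling's lower bound
`K! ≥ √(2πK) (K / e)^K`.
-/

open Nat in
theorem poissonTail_le_geometric {lam : ℝ} (hlam : 0 ≤ lam) {K : ℕ} (hK : lam < K + 1) :
    poissonTail lam K ≤ exp (-lam) * lam ^ K / K ! / (1 - lam / (K + 1)) := by
  set r := lam / (K + 1)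
  have hr : r < 1 := (div_lt_one (by positivity)).2 hK
  have hterm (j : ℕ) :
      exp (-lam) * lam ^ (K + j) / (K + j)! ≤ exp (-lam) * lam ^ K / K ! * r ^ j := by
    have hfac : (K ! : ℝ) * (K + 1) ^ j ≤ (K + j)! := mod_cast factorial_mul_pow_le_factorial
    calc exp (-lam) * lam ^ (K + j) / (K + j)!
        ≤ exp (-lam) * lam ^ (K + j) / (K ! * (K + 1) ^ j) := by gcongr
      _ = exp (-lam) * lam ^ K / K ! * r ^ j := by
        rw [pow_add, div_pow]
        field_simp
  have hgeom := (hasSum_geometric_of_lt_one (by positivity) hr).mul_left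
    (exp (-lam) * lam ^ K / K !)
  rw [← div_eq_mul_inv] at hgeom
  have hsum := hgeom.summable.of_nonneg_of_le (fun j => by positivity) hterm
  exact hasSum_le hterm hsum.hasSum hgeom

open Nat in
theorem inv_factorial_le_exp_div_stirling {n : ℕ} (hn : n ≠ 0) :
    (n ! : ℝ)⁻¹ ≤ exp n / (√(2 * π * n) * n ^ n) := by
  have hstirling := Stirling.le_factorial_stirling n
  rw [div_pow, exp_one_pow] at hstirling
  rw [inv_le_comm₀ (by positivity) (by positivity), inv_div]
  calc √(2 * π * n) * n ^ n / exp n = √(2 * π * n) * (n ^ n / exp n) := by ring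
    _ ≤ n ! := hstirling

/-- for `λ > 0`, `t > 1` and a positive integer `K ≥ λ(1+t)`,
`Po(λ)([K,∞)) ≤ ((t+1)/t) · λ^K e^{K−λ} / (√(2πK) · K^K)`. -/
theorem poissonTail_le_stirling_bound
    (lam : ℝ) (hlam : 0 < lam) (t : ℝ) (ht : 1 < t)
    (K : ℕ) (hKpos : 0 < K) (hK : lam * (1 + t) ≤ (K : ℝ)) :
    poissonTail lam K ≤
      (t + 1) / t * lam ^ K * Real.exp ((K : ℝ) - lam) /
        (Real.sqrt (2 * π * K) * (K : ℝ) ^ K) := by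
  have hratio : t / (t + 1) ≤ 1 - lam / (K + 1) := by
    rw [le_sub_comm, div_le_iff₀ (by positivity)]
    field_simp
    nlinarith
  calc poissonTail lam K ≤ exp (-lam) * lam ^ K / K.factorial / (1 - lam / (K + 1)) :=
        poissonTail_le_geometric hlam.le (by nlinarith)
    _ ≤ exp (-lam) * lam ^ K * (exp K / (√(2 * π * K) * K ^ K)) / (t / (t + 1)) := by
        rw [div_eq_mul_inv _ (K.factorial : ℝ)]
        gcongr
        exact inv_factorial_le_exp_div_stirling hKpos.ne'
    _ = _ := by
        rw [exp_sub, exp_neg]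
        field_simp
end

section
/- For every λ > 0, the function t ↦ g(λ,t) is continuous and strictly increasing on (0,∞), and maps the interval (0,∞) bijectively onto (0,∞). -/
open Real

/-- `t_λ = 1 + (1 + √(1 + 16πλ))/(4πλ)`. -/
noncomputable def tcrit (lam : ℝ) : ℝ :=
  1 + (1 + Real.sqrt (1 + 16 * Real.pi * lam)) / (4 * Real.pi * lam)

/-- `h(λ,t)`: equal to `1` for `t ≤ t_λ` and to `√(t+1)/(√(2πλ)(t-1))` for `t > t_λ`. -/
noncomputable def hfun (lam t : ℝ) : ℝ :=
  if t ≤ tcrit lam then 1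
  else Real.sqrt (t + 1) / (Real.sqrt (2 * Real.pi * lam) * (t - 1))

/-- `g(λ,t) = λ((1+t)log(1+t) − t) − log h(λ,t)`. -/
noncomputable def gfun (lam t : ℝ) : ℝ :=
  lam * ((1 + t) * Real.log (1 + t) - t) - Real.log (hfun lam t)

/-!
Write `g(λ,t) = λ B(t) - log h(λ,t)` with `B(t) = (1+t) log(1+t) - t`, whose derivative
`log(1+t)` is positive on `(0,∞)`. Since `2πλ(t_λ-1)² = t_λ+1`, the formula
`q(t) = √(t+1)/(√(2πλ)(t-1))` used for `t > t_λ` equals `1` at `t_λ`, so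
`h(λ,t) = q(max t t_λ)`; as `q` is continuous and decreasing on `(1,∞)`, `h(λ,·)` is continuous,
nonincreasing and at most `1`. Hence `g(λ,·)` is continuous, strictly increasing on `[0,∞)`,
vanishes at `0` and dominates `λ B`, which tends to `∞`; the intermediate value theorem gives
surjectivity.
-/

open Set Filter

noncomputable def bennett (t : ℝ) : ℝ := (1 + t) * log (1 + t) - t

lemma continuous_bennett : Continuous bennett :=
  (continuous_mul_log.comp (continuous_const.add continuous_id)).sub continuous_id

lemma hasDerivAt_bennett {t : ℝ} (ht : -1 < t) : HasDerivAt bennett (log (1 + t)) t :=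
  (((hasDerivAt_mul_log (by linarith : 1 + t ≠ 0)).comp_const_add 1 t).sub
    (hasDerivAt_id' t)).congr_deriv (add_sub_cancel_right _ _)

lemma strictMonoOn_bennett : StrictMonoOn bennett (Ici 0) := by
  refine strictMonoOn_of_deriv_pos (convex_Ici 0) continuous_bennett.continuousOn fun t ht ↦ ?_
  rw [interior_Ici, mem_Ioi] at ht
  rw [(hasDerivAt_bennett (by linarith)).deriv]
  exact log_pos (by linarith)

lemma self_le_bennett {t : ℝ} (ht : exp 2 ≤ t) : t ≤ bennett t := by
  have h2 : 2 ≤ log (1 + t) := by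
    rw [← log_exp 2]
    exact log_le_log (exp_pos 2) (by linarith)
  have h1 : 0 < 1 + t := by linarith [exp_pos 2]
  unfold bennett
  nlinarith

lemma tendsto_bennett_atTop : Tendsto bennett atTop atTop :=
  tendsto_atTop_mono' atTop (eventually_ge_atTop (exp 2) |>.mono fun _ ↦ self_le_bennett)
    tendsto_id

lemma gfun_eq (lam t : ℝ) : gfun lam t = lam * bennett t - log (hfun lam t) := rfl

section

variable {lam : ℝ}

lemma one_lt_tcrit (hlam : 0 < lam) : 1 < tcrit lam := by
  have : 0 < (1 + √(1 + 16 * π * lam)) / (4 * π * lam) := by positivity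
  unfold tcrit
  linarith

/-- `t_λ` is the root larger than `1` of `2πλ (t - 1)² = t + 1`. -/
lemma tcrit_sq (hlam : 0 < lam) : 2 * π * lam * (tcrit lam - 1) ^ 2 = tcrit lam + 1 := by
  have hs : √(1 + 16 * π * lam) ^ 2 = 1 + 16 * π * lam := sq_sqrt (by positivity)
  unfold tcrit
  generalize √(1 + 16 * π * lam) = s at hs
  field_simp
  linear_combination 2 * hs

noncomputable def hfunTail (lam t : ℝ) : ℝ := √(t + 1) / (√(2 * π * lam) * (t - 1))

lemma hfunTail_tcrit (hlam : 0 < lam) : hfunTail lam (tcrit lam) = 1 := by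
  have h1 : 0 < tcrit lam - 1 := by linarith [one_lt_tcrit hlam]
  rw [hfunTail, ← tcrit_sq hlam, sqrt_mul (by positivity), sqrt_sq h1.le]
  exact div_self (by positivity)

lemma continuousOn_hfunTail (hlam : 0 < lam) : ContinuousOn (hfunTail lam) (Ioi 1) := by
  refine ContinuousOn.div (by fun_prop) (by fun_prop) fun t ht ↦ ?_
  have : 0 < t - 1 := sub_pos.2 ht
  positivity

lemma antitoneOn_sqrt_add_one_div_sub_one :
    AntitoneOn (fun t : ℝ ↦ √(t + 1) / (t - 1)) (Ioi 1) := by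
  intro s hs t ht hst
  rw [mem_Ioi] at hs ht
  rw [div_le_div_iff₀ (by linarith) (by linarith)]
  refine (pow_le_pow_iff_left₀ (by positivity) (by positivity) two_ne_zero).1 ?_
  rw [mul_pow, mul_pow, sq_sqrt (by linarith), sq_sqrt (by linarith)]
  nlinarith [mul_nonneg (sub_nonneg.2 hst) (mul_pos (sub_pos.2 hs) (sub_pos.2 ht)).le]

lemma antitoneOn_hfunTail : AntitoneOn (hfunTail lam) (Ioi 1) := by
  intro s hs t ht hst
  simp only [hfunTail, div_mul_eq_div_div_swap]
  exact div_le_div_of_nonneg_right (antitoneOn_sqrt_add_one_div_sub_one hs ht hst) (sqrt_nonneg _)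

lemma hfun_eq_hfunTail_max (hlam : 0 < lam) (t : ℝ) :
    hfun lam t = hfunTail lam (max t (tcrit lam)) := by
  unfold hfun
  split_ifs with h
  · rw [max_eq_right h, hfunTail_tcrit hlam]
  · rw [max_eq_left (not_le.1 h).le, hfunTail]

lemma hfunTail_pos (hlam : 0 < lam) {t : ℝ} (ht : 1 < t) : 0 < hfunTail lam t := by
  have : 0 < t - 1 := sub_pos.2 ht
  unfold hfunTail
  exact div_pos (sqrt_pos.2 (by linarith)) (by positivity)

lemma hfun_pos (hlam : 0 < lam) (t : ℝ) : 0 < hfun lam t := by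
  rw [hfun_eq_hfunTail_max hlam]
  exact hfunTail_pos hlam ((one_lt_tcrit hlam).trans_le (le_max_right _ _))

lemma hfun_le_one (hlam : 0 < lam) (t : ℝ) : hfun lam t ≤ 1 := by
  have h1 := one_lt_tcrit hlam
  rw [hfun_eq_hfunTail_max hlam, ← hfunTail_tcrit hlam]
  exact antitoneOn_hfunTail (mem_Ioi.2 h1) (mem_Ioi.2 (h1.trans_le (le_max_right _ _)))
    (le_max_right _ _)

lemma antitone_hfun (hlam : 0 < lam) : Antitone (hfun lam) := by
  intro s t hst
  have h1 := one_lt_tcrit hlam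
  simp only [hfun_eq_hfunTail_max hlam]
  exact antitoneOn_hfunTail (mem_Ioi.2 (h1.trans_le (le_max_right _ _)))
    (mem_Ioi.2 (h1.trans_le (le_max_right _ _))) (max_le_max_right _ hst)

lemma continuous_hfun (hlam : 0 < lam) : Continuous (hfun lam) := by
  rw [funext (hfun_eq_hfunTail_max hlam)]
  exact (continuousOn_hfunTail hlam).comp_continuous (continuous_id.max continuous_const)
    fun t ↦ (one_lt_tcrit hlam).trans_le (le_max_right _ _)

lemma gfun_zero (hlam : 0 < lam) : gfun lam 0 = 0 := by
  simp [gfun, hfun, zero_le_one.trans (one_lt_tcrit hlam).le]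

lemma continuous_gfun (hlam : 0 < lam) : Continuous (gfun lam) :=
  (continuous_const.mul continuous_bennett).sub
    ((continuous_hfun hlam).log fun t ↦ (hfun_pos hlam t).ne')

lemma strictMonoOn_gfun (hlam : 0 < lam) : StrictMonoOn (gfun lam) (Ici 0) := by
  intro s hs t ht hst
  have hb : bennett s < bennett t := strictMonoOn_bennett hs ht hst
  have hh : log (hfun lam t) ≤ log (hfun lam s) :=
    log_le_log (hfun_pos hlam t) (antitone_hfun hlam hst.le)
  rw [gfun_eq, gfun_eq]
  nlinarith

lemma mul_bennett_le_gfun (hlam : 0 < lam) (t : ℝ) : lam * bennett t ≤ gfun lam t := by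
  have : log (hfun lam t) ≤ 0 := log_nonpos (hfun_pos hlam t).le (hfun_le_one hlam t)
  rw [gfun_eq]
  linarith

lemma tendsto_gfun_atTop (hlam : 0 < lam) : Tendsto (gfun lam) atTop atTop :=
  tendsto_atTop_mono (mul_bennett_le_gfun hlam) (tendsto_bennett_atTop.const_mul_atTop hlam)

end

/-- for every `λ > 0`, `t ↦ g(λ,t)` is continuous and strictly
increasing on `(0,∞)`, and maps `(0,∞)` bijectively onto `(0,∞)`. -/
theorem gfun_continuous_strictMono_bijOn (lam : ℝ) (hlam : 0 < lam) :
    ContinuousOn (gfun lam) (Set.Ioi (0 : ℝ)) ∧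
    StrictMonoOn (gfun lam) (Set.Ioi (0 : ℝ)) ∧
    Set.BijOn (gfun lam) (Set.Ioi (0 : ℝ)) (Set.Ioi (0 : ℝ)) := by
  have hmono := strictMonoOn_gfun hlam
  have hmono' : StrictMonoOn (gfun lam) (Ioi 0) := hmono.mono Ioi_subset_Ici_self
  refine ⟨(continuous_gfun hlam).continuousOn, hmono', fun t ht ↦ ?_, hmono'.injOn,
    fun y hy ↦ ?_⟩
  · simpa [gfun_zero hlam] using hmono self_mem_Ici (mem_Ici.2 (le_of_lt ht)) ht
  · obtain ⟨b, hb0, hyb⟩ :=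
      ((eventually_ge_atTop 0).and ((tendsto_gfun_atTop hlam).eventually_gt_atTop y)).exists
    have hy' : y ∈ Ioo (gfun lam 0) (gfun lam b) := ⟨(gfun_zero hlam).symm ▸ hy, hyb⟩
    obtain ⟨x, hx, rfl⟩ := intermediate_value_Ioo hb0 (continuous_gfun hlam).continuousOn hy'
    exact ⟨x, hx.1, rfl⟩
end

section
/- Let W be a sum of finitely many mutually independent Bernoulli random variables with parameters p_v, λ = Σ_v p_v > 0 and λ₂ = Σ_v p_v². Then the total variation distance between the law of W and the Poisson distribution with parameter λ satisfies d_TV(L(W), Po(λ)) ≤ min(1, 1/λ) · λ₂, where d_TV(μ,ν) = sup_{A⊆ℕ} |μ(A) − ν(A)|. -/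
open MeasureTheory ProbabilityTheory Real

/-- The probability assigned to a set `A ⊆ ℕ` by the Poisson distribution
with parameter `λ`: `Po(λ)(A) = Σ_{n∈A} e^{−λ} λ^n / n!`. -/
noncomputable def poissonProb (lam : ℝ) (A : Set ℕ) : ℝ :=
  ∑' n : ℕ, A.indicator (fun n => Real.exp (-lam) * lam ^ n / (Nat.factorial n)) n

/-!
Stein–Chen method. With `π` the Poisson weights and `Z ~ Po(λ)`, the function
`g_A(k) = E[1_A(Z) − Po(λ)(A); Z < k] / (k π_k)` solves `λ g(k+1) − k g(k) = 1_A(k) − Po(λ)(A)`,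
so `P(W ∈ A) − Po(λ)(A) = E[λ g_A(W+1) − W g_A(W)]`. Writing `W = W_v + I_v` with `W_v`
independent of `I_v` gives `E[I_v g(W)] = p_v E[g(W_v+1)]` and
`E[g(W+1) − g(W_v+1)] = p_v E[g(W_v+2) − g(W_v+1)]`, hence
`E[λ g(W+1) − W g(W)] = Σ_v p_v² E[g(W_v+2) − g(W_v+1)]`.
It remains to bound `|g_A(k+1) − g_A(k)|` by `(1 − e^{−λ})/λ` for `k ≥ 1`. The parts of `A`
below and above `k` only lower the increment, because `P(Z < k)/(k π_k)` increases and
`P(Z ≥ k)/(k π_k)` decreases in `k`; the point `k` itself contributes at most `(1 − e^{−λ})/λ`.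
The lower bound follows from `g_{Aᶜ} = −g_A`.
-/

open Finset

noncomputable def poissonMass (lam : ℝ) (n : ℕ) : ℝ := exp (-lam) * lam ^ n / n.factorial

section Poisson

variable {lam : ℝ}

lemma poissonMass_pos (hlam : 0 < lam) (n : ℕ) : 0 < poissonMass lam n := by
  unfold poissonMass; positivity

lemma poissonMass_nonneg (hlam : 0 ≤ lam) (n : ℕ) : 0 ≤ poissonMass lam n := by
  unfold poissonMass; positivity

lemma poissonMass_zero (lam : ℝ) : poissonMass lam 0 = exp (-lam) := by
  simp [poissonMass]

lemma succ_mul_poissonMass_succ (lam : ℝ) (n : ℕ) :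
    (n + 1) * poissonMass lam (n + 1) = lam * poissonMass lam n := by
  simp only [poissonMass, Nat.factorial_succ, Nat.cast_mul, pow_succ]
  field_simp
  push_cast
  ring

lemma hasSum_poissonMass (lam : ℝ) : HasSum (poissonMass lam) 1 := by
  have h := (NormedSpace.expSeries_div_hasSum_exp lam).mul_left (exp (-lam))
  rw [← exp_eq_exp_ℝ, ← exp_add, neg_add_cancel, exp_zero] at h
  exact h.congr_fun fun n => mul_div_assoc _ _ _

lemma poissonProb_eq_tsum (lam : ℝ) (A : Set ℕ) :
    poissonProb lam A = ∑' n, A.indicator (poissonMass lam) n := rfl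

lemma poissonProb_compl (lam : ℝ) (A : Set ℕ) : poissonProb lam Aᶜ = 1 - poissonProb lam A := by
  rw [poissonProb_eq_tsum, poissonProb_eq_tsum, Set.indicator_compl]
  exact ((hasSum_poissonMass lam).sub
    ((hasSum_poissonMass lam).summable.indicator A).hasSum).tsum_eq

lemma sum_range_indicator_le_poissonProb (hlam : 0 ≤ lam) (A : Set ℕ) (k : ℕ) :
    ∑ i ∈ range k, A.indicator (poissonMass lam) i ≤ poissonProb lam A :=
  ((hasSum_poissonMass lam).summable.indicator A).sum_le_tsum _
    (fun i _ => Set.indicator_nonneg (fun n _ => poissonMass_nonneg hlam n) i)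

lemma sum_range_poissonMass_le_one (hlam : 0 ≤ lam) (k : ℕ) :
    ∑ i ∈ range k, poissonMass lam i ≤ 1 :=
  sum_le_hasSum _ (fun n _ => poissonMass_nonneg hlam n) (hasSum_poissonMass lam)

lemma one_sub_sum_range_poissonMass (lam : ℝ) (k : ℕ) :
    1 - ∑ i ∈ range k, poissonMass lam i = ∑' i, poissonMass lam (i + k) := by
  rw [← (hasSum_poissonMass lam).tsum_eq,
    ← (hasSum_poissonMass lam).summable.sum_add_tsum_nat_add k, add_sub_cancel_left]

lemma mul_sum_range_poissonMass_le (hlam : 0 ≤ lam) (k : ℕ) :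
    lam * ∑ i ∈ range k, poissonMass lam i ≤
      k * (∑ i ∈ range (k + 1), poissonMass lam i - exp (-lam)) := by
  rw [sum_range_succ', poissonMass_zero, add_sub_cancel_right, mul_sum, mul_sum]
  refine sum_le_sum fun i hi => ?_
  rw [← succ_mul_poissonMass_succ]
  gcongr
  · exact poissonMass_nonneg hlam _
  · exact_mod_cast mem_range.1 hi

lemma mul_one_sub_sum_range_poissonMass_le (hlam : 0 ≤ lam) (k : ℕ) :
    k * (1 - ∑ i ∈ range (k + 1), poissonMass lam i) ≤
      lam * (1 - ∑ i ∈ range k, poissonMass lam i) := by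
  have hs (n : ℕ) : Summable fun i => poissonMass lam (i + n) :=
    (summable_nat_add_iff n).2 (hasSum_poissonMass lam).summable
  rw [one_sub_sum_range_poissonMass, one_sub_sum_range_poissonMass, ← tsum_mul_left,
    ← tsum_mul_left]
  refine Summable.tsum_le_tsum (fun i => ?_) ((hs _).mul_left _) ((hs _).mul_left _)
  rw [← succ_mul_poissonMass_succ, ← add_assoc, add_right_comm]
  gcongr
  · exact poissonMass_nonneg hlam _
  · push_cast; linarith [(i.cast_nonneg : (0 : ℝ) ≤ i)]

lemma one_sub_exp_neg_div_le_min (hlam : 0 < lam) : (1 - exp (-lam)) / lam ≤ min 1 (1 / lam) := by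
  refine le_min ((div_le_one hlam).2 (by linarith [add_one_le_exp (-lam)])) ?_
  gcongr
  linarith [exp_pos (-lam)]

end Poisson

noncomputable def steinSolution (lam : ℝ) (h : ℕ → ℝ) (k : ℕ) : ℝ :=
  (∑ i ∈ range k, h i * poissonMass lam i) / (k * poissonMass lam k)

noncomputable def poissonSteinSolution (lam : ℝ) (A : Set ℕ) : ℕ → ℝ :=
  steinSolution lam fun i => A.indicator 1 i - poissonProb lam A

section Stein

variable {lam : ℝ}

theorem steinSolution_spec (hlam : 0 < lam) (h : ℕ → ℝ) (k : ℕ) :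
    lam * steinSolution lam h (k + 1) - k * steinSolution lam h k = h k := by
  have hq := poissonMass_pos hlam k
  have hsucc : ((k + 1 : ℕ) : ℝ) * poissonMass lam (k + 1) = lam * poissonMass lam k := by
    push_cast; exact succ_mul_poissonMass_succ lam k
  rw [steinSolution, steinSolution, hsucc, sum_range_succ]
  rcases k.eq_zero_or_pos with rfl | hk
  · field_simp; simp
  · have hk' : (0 : ℝ) < k := by exact_mod_cast hk
    field_simp
    ring

theorem poissonSteinSolution_spec (hlam : 0 < lam) (A : Set ℕ) (k : ℕ) :
    lam * poissonSteinSolution lam A (k + 1) - k * poissonSteinSolution lam A k =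
      A.indicator 1 k - poissonProb lam A :=
  steinSolution_spec hlam _ k

lemma steinSolution_neg (lam : ℝ) (h : ℕ → ℝ) :
    steinSolution lam (fun i => -h i) = -steinSolution lam h := by
  funext k
  simp only [steinSolution, neg_mul, sum_neg_distrib, neg_div, Pi.neg_apply]

lemma poissonSteinSolution_compl (lam : ℝ) (A : Set ℕ) :
    poissonSteinSolution lam Aᶜ = -poissonSteinSolution lam A := by
  rw [poissonSteinSolution, poissonSteinSolution, ← steinSolution_neg]
  congr 1
  funext i
  rw [poissonProb_compl, Set.indicator_compl, Pi.sub_apply, Pi.one_apply]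
  ring

lemma poissonSteinSolution_eq (lam : ℝ) (A : Set ℕ) (k : ℕ) :
    poissonSteinSolution lam A k =
      (∑ i ∈ range k, A.indicator (poissonMass lam) i -
        poissonProb lam A * ∑ i ∈ range k, poissonMass lam i) / (k * poissonMass lam k) := by
  have hind (i : ℕ) : A.indicator 1 i * poissonMass lam i = A.indicator (poissonMass lam) i := by
    by_cases h : i ∈ A <;> simp [h]
  simp only [poissonSteinSolution, steinSolution, sub_mul, sum_sub_distrib, mul_sum, hind]

lemma poissonSteinSolution_succ_sub (hlam : 0 < lam) (A : Set ℕ) {k : ℕ} (hk : k ≠ 0) :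
    poissonSteinSolution lam A (k + 1) - poissonSteinSolution lam A k =
      (k * (∑ i ∈ range (k + 1), A.indicator (poissonMass lam) i -
          poissonProb lam A * ∑ i ∈ range (k + 1), poissonMass lam i) -
        lam * (∑ i ∈ range k, A.indicator (poissonMass lam) i -
          poissonProb lam A * ∑ i ∈ range k, poissonMass lam i)) /
        (k * poissonMass lam k) / lam := by
  have hq := poissonMass_pos hlam k
  have hk' : (k : ℝ) ≠ 0 := Nat.cast_ne_zero.2 hk
  rw [poissonSteinSolution_eq, poissonSteinSolution_eq, Nat.cast_succ,
    succ_mul_poissonMass_succ]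
  field_simp

theorem poissonSteinSolution_succ_sub_le (hlam : 0 < lam) (A : Set ℕ) {k : ℕ} (hk : 1 ≤ k) :
    poissonSteinSolution lam A (k + 1) - poissonSteinSolution lam A k ≤
      (1 - exp (-lam)) / lam := by
  have hhead := mul_sum_range_poissonMass_le hlam.le k
  have htail := mul_one_sub_sum_range_poissonMass_le hlam.le k
  have hP₁ := sum_range_poissonMass_le_one hlam.le (k + 1)
  have hPo := sum_range_indicator_le_poissonProb hlam.le A (k + 1)
  rw [poissonSteinSolution_succ_sub hlam A (by omega)]
  rw [sum_range_succ] at hhead htail hP₁ hPo ⊢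
  rw [sum_range_succ]
  set q := poissonMass lam
  set Po := poissonProb lam A
  set P := ∑ i ∈ range k, q i
  set F := ∑ i ∈ range k, A.indicator q i
  set ε := A.indicator (1 : ℕ → ℝ) k
  have hq := poissonMass_pos hlam k
  have hk' : (0 : ℝ) < k := by exact_mod_cast hk
  have hε : A.indicator q k = ε * q k := by by_cases h : k ∈ A <;> simp [ε, h]
  have hε₁ : ε ≤ 1 := Set.indicator_le_self' (fun _ _ => zero_le_one) k
  have hF : 0 ≤ F :=
    sum_nonneg fun i _ => Set.indicator_nonneg (fun n _ => (poissonMass_pos hlam n).le) i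
  have hP : 0 ≤ P := sum_nonneg fun i _ => (poissonMass_pos hlam i).le
  rw [hε] at hPo ⊢
  -- The numerator splits into the two monotonicity defects, weighted by the nonnegative masses
  -- of `A` below and above `k`, plus the contribution of the point `k` itself.
  have hsplit : k * (F + ε * q k - Po * (P + q k)) - lam * (F - Po * P) =
      F * (k * (1 - (P + q k)) - lam * (1 - P)) +
        (Po - (F + ε * q k)) * (lam * P - k * (P + q k)) +
        ε * q k * (k * (1 - (P + q k)) + lam * P) := by ring
  have h1 : F * (k * (1 - (P + q k)) - lam * (1 - P)) ≤ 0 :=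
    mul_nonpos_of_nonneg_of_nonpos hF (by linarith)
  have h2 : (Po - (F + ε * q k)) * (lam * P - k * (P + q k)) ≤ 0 :=
    mul_nonpos_of_nonneg_of_nonpos (by linarith) (by linarith [mul_pos hk' (exp_pos (-lam))])
  have h3 : ε * q k * (k * (1 - (P + q k)) + lam * P) ≤ q k * (k * (1 - (P + q k)) + lam * P) :=
    mul_le_mul_of_nonneg_right (mul_le_of_le_one_left hq.le hε₁)
      (add_nonneg (mul_nonneg hk'.le (by linarith)) (mul_nonneg hlam.le hP))
  refine div_le_div_of_nonneg_right ((div_le_iff₀' (by positivity)).2 ?_) hlam.le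
  linarith [mul_le_mul_of_nonneg_left hhead hq.le]

theorem abs_poissonSteinSolution_succ_sub_le (hlam : 0 < lam) (A : Set ℕ) {k : ℕ} (hk : 1 ≤ k) :
    |poissonSteinSolution lam A (k + 1) - poissonSteinSolution lam A k| ≤
      (1 - exp (-lam)) / lam := by
  have hc := poissonSteinSolution_succ_sub_le hlam Aᶜ hk
  rw [poissonSteinSolution_compl, Pi.neg_apply, Pi.neg_apply] at hc
  exact abs_le.2 ⟨by linarith, poissonSteinSolution_succ_sub_le hlam A hk⟩

end Stein

section Bernoulli

variable {Ω : Type*} [MeasurableSpace Ω] {μ : Measure Ω}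

lemma integrable_comp_of_le [IsFiniteMeasure μ] {X : Ω → ℕ} (hX : Measurable X) {N : ℕ}
    (hXN : ∀ ω, X ω ≤ N) (f : ℕ → ℝ) : Integrable (fun ω => f (X ω)) μ :=
  .of_bound (Measurable.of_discrete.comp hX).aestronglyMeasurable (∑ n ∈ range (N + 1), |f n|)
    (ae_of_all _ fun ω => single_le_sum (f := fun n => |f n|) (fun _ _ => abs_nonneg _)
      (mem_range.2 (Nat.lt_succ_of_le (hXN ω))))

lemma integral_natCast_eq_of_bernoulli {Y : Ω → ℕ} (hY : Measurable Y)
    (hY01 : ∀ ω, Y ω = 0 ∨ Y ω = 1) {p : ℝ} (hp : 0 ≤ p)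
    (hYp : μ {ω | Y ω = 1} = ENNReal.ofReal p) : ∫ ω, (Y ω : ℝ) ∂μ = p := by
  have hind : (fun ω => (Y ω : ℝ)) = {ω | Y ω = 1}.indicator 1 := by
    funext ω
    rcases hY01 ω with h | h <;> simp [h]
  rw [hind, integral_indicator_one (s := {ω | Y ω = 1}) (hY (measurableSet_singleton 1)),
    measureReal_def, hYp, ENNReal.toReal_ofReal hp]

lemma toReal_map_apply_sub_eq_integral [IsProbabilityMeasure μ] {X : Ω → ℕ} (hX : Measurable X)
    (A : Set ℕ) (c : ℝ) :
    (μ.map X A).toReal - c = ∫ ω, (A.indicator 1 (X ω) - c) ∂μ := by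
  have := Measure.isProbabilityMeasure_map (μ := μ) hX.aemeasurable
  rw [← integral_map (f := fun n => A.indicator (1 : ℕ → ℝ) n - c) hX.aemeasurable
      Measurable.of_discrete.aestronglyMeasurable,
    integral_sub (f := A.indicator 1) ((integrable_const 1).indicator .of_discrete)
      (integrable_const c),
    integral_indicator_one .of_discrete, integral_const, probReal_univ, one_smul, measureReal_def]

lemma ProbabilityTheory.IndepFun.integral_natCast_mul_comp {X Y : Ω → ℕ} (hXY : IndepFun X Y μ)
    (hX : Measurable X) (hY : Measurable Y) (f : ℕ → ℝ) :
    ∫ ω, (Y ω : ℝ) * f (X ω) ∂μ = (∫ ω, (Y ω : ℝ) ∂μ) * ∫ ω, f (X ω) ∂μ :=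
  (hXY.symm.comp (φ := fun n : ℕ => (n : ℝ)) .of_discrete (.of_discrete (f := f)))
    |>.integral_fun_mul_eq_mul_integral (Measurable.of_discrete.comp hY).aestronglyMeasurable
      (Measurable.of_discrete.comp hX).aestronglyMeasurable

lemma ProbabilityTheory.IndepFun.integral_natCast_mul_comp_add {X Y : Ω → ℕ}
    (hXY : IndepFun X Y μ) (hX : Measurable X) (hY : Measurable Y)
    (hY01 : ∀ ω, Y ω = 0 ∨ Y ω = 1) (f : ℕ → ℝ) :
    ∫ ω, (Y ω : ℝ) * f (X ω + Y ω) ∂μ = (∫ ω, (Y ω : ℝ) ∂μ) * ∫ ω, f (X ω + 1) ∂μ := by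
  have hpt (ω : Ω) : (Y ω : ℝ) * f (X ω + Y ω) = Y ω * f (X ω + 1) := by
    rcases hY01 ω with h | h <;> simp [h]
  simp_rw [hpt]
  exact hXY.integral_natCast_mul_comp hX hY fun n => f (n + 1)

lemma ProbabilityTheory.IndepFun.integral_comp_add_sub_integral_comp {X Y : Ω → ℕ}
    (hXY : IndepFun X Y μ) (hX : Measurable X) (hY : Measurable Y)
    (hY01 : ∀ ω, Y ω = 0 ∨ Y ω = 1) {f : ℕ → ℝ}
    (hfXY : Integrable (fun ω => f (X ω + Y ω)) μ) (hfX : Integrable (fun ω => f (X ω)) μ) :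
    ∫ ω, f (X ω + Y ω) ∂μ - ∫ ω, f (X ω) ∂μ =
      (∫ ω, (Y ω : ℝ) ∂μ) * ∫ ω, (f (X ω + 1) - f (X ω)) ∂μ := by
  have hpt (ω : Ω) : f (X ω + Y ω) - f (X ω) = Y ω * (f (X ω + 1) - f (X ω)) := by
    rcases hY01 ω with h | h <;> simp [h]
  rw [← integral_sub hfXY hfX]
  simp_rw [hpt]
  exact hXY.integral_natCast_mul_comp hX hY fun n => f (n + 1) - f n

lemma ProbabilityTheory.IndepFun.stein_identity_add_bernoulli [IsFiniteMeasure μ] {X Y : Ω → ℕ}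
    (hXY : IndepFun X Y μ) (hX : Measurable X) (hY : Measurable Y)
    (hY01 : ∀ ω, Y ω = 0 ∨ Y ω = 1) {N : ℕ} (hXN : ∀ ω, X ω ≤ N) (g : ℕ → ℝ) :
    (∫ ω, (Y ω : ℝ) ∂μ) * ∫ ω, g (X ω + Y ω + 1) ∂μ - ∫ ω, (Y ω : ℝ) * g (X ω + Y ω) ∂μ =
      (∫ ω, (Y ω : ℝ) ∂μ) ^ 2 * ∫ ω, (g (X ω + 1 + 1) - g (X ω + 1)) ∂μ := by
  have hXY₁ (ω : Ω) : X ω + Y ω ≤ N + 1 := by have := hXN ω; rcases hY01 ω with h | h <;> omega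
  rw [hXY.integral_natCast_mul_comp_add hX hY hY01, ← mul_sub, sq, mul_assoc,
    hXY.integral_comp_add_sub_integral_comp (f := fun n => g (n + 1)) hX hY hY01
      (integrable_comp_of_le (X := fun ω => X ω + Y ω) (hX.add hY) hXY₁ fun n => g (n + 1))
      (integrable_comp_of_le hX hXN fun n => g (n + 1))]

end Bernoulli

section BernoulliSum

variable {Ω : Type*} [MeasurableSpace Ω] {μ : Measure Ω} {V : Type*} [Fintype V] [DecidableEq V]
  {I : V → Ω → ℕ} {p : V → ℝ}

theorem integral_stein_bernoulli_sum [IsFiniteMeasure μ] (hmeas : ∀ v, Measurable (I v))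
    (h01 : ∀ v ω, I v ω = 0 ∨ I v ω = 1) (hindep : iIndepFun I μ)
    (hmean : ∀ v, ∫ ω, (I v ω : ℝ) ∂μ = p v) (g : ℕ → ℝ) :
    ∫ ω, ((∑ v, p v) * g (∑ v, I v ω + 1) - (∑ v, I v ω : ℕ) * g (∑ v, I v ω)) ∂μ =
      ∑ v, p v ^ 2 * ∫ ω, (g (∑ u ∈ univ.erase v, I u ω + 1 + 1) -
        g (∑ u ∈ univ.erase v, I u ω + 1)) ∂μ := by
  set W := fun ω => ∑ v, I v ω
  set W' := fun v ω => ∑ u ∈ univ.erase v, I u ω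
  have hW (v : V) (ω : Ω) : W ω = W' v ω + I v ω := (sum_erase_add _ _ (mem_univ v)).symm
  have hI₁ (v : V) (ω : Ω) : I v ω ≤ 1 := by rcases h01 v ω with h | h <;> simp [h]
  have hWle (ω : Ω) : W ω ≤ Fintype.card V := by
    simpa using sum_le_card_nsmul univ (fun v => I v ω) 1 fun v _ => hI₁ v ω
  have hW'le (v : V) (ω : Ω) : W' v ω ≤ Fintype.card V := by
    have := hWle ω
    rw [hW v ω] at this
    omega
  have hWm : Measurable W := Finset.measurable_sum _ fun v _ => hmeas v
  have hW'm (v : V) : Measurable (W' v) := Finset.measurable_sum _ fun u _ => hmeas u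
  have hind (v : V) : IndepFun (W' v) (I v) μ := by
    convert hindep.indepFun_finsetSum_of_notMem hmeas (notMem_erase v univ) using 1
    exact funext fun ω => (Finset.sum_apply ω _ _).symm
  have hint (f : ℕ → ℝ) : Integrable (fun ω => f (W ω)) μ := integrable_comp_of_le hWm hWle f
  have hWg : ∫ ω, (W ω : ℝ) * g (W ω) ∂μ = ∑ v, ∫ ω, (I v ω : ℝ) * g (W ω) ∂μ := by
    rw [← integral_finsetSum]
    · simp only [W, Nat.cast_sum, sum_mul]
    · exact fun v _ => (hint g).bdd_mul (c := 1)
        (Measurable.of_discrete.comp (hmeas v)).aestronglyMeasurable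
        (ae_of_all _ fun ω => by rw [Real.norm_natCast]; exact_mod_cast hI₁ v ω)
  calc ∫ ω, ((∑ v, p v) * g (W ω + 1) - (W ω : ℝ) * g (W ω)) ∂μ
      = ∑ v, (p v * ∫ ω, g (W ω + 1) ∂μ - ∫ ω, (I v ω : ℝ) * g (W ω) ∂μ) := by
        rw [integral_sub ((hint fun n => g (n + 1)).const_mul _) (hint fun n => n * g n),
          integral_const_mul, hWg, sum_mul, sum_sub_distrib]
    _ = _ := sum_congr rfl fun v _ => by
        simp_rw [hW v, ← hmean]
        exact (hind v).stein_identity_add_bernoulli (hW'm v) (hmeas v) (h01 v) (hW'le v) g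

theorem abs_integral_stein_bernoulli_sum_le [IsProbabilityMeasure μ] (hmeas : ∀ v, Measurable (I v))
    (h01 : ∀ v ω, I v ω = 0 ∨ I v ω = 1) (hindep : iIndepFun I μ)
    (hmean : ∀ v, ∫ ω, (I v ω : ℝ) ∂μ = p v) {g : ℕ → ℝ} {D : ℝ}
    (hg : ∀ k, 1 ≤ k → |g (k + 1) - g k| ≤ D) :
    |∫ ω, ((∑ v, p v) * g (∑ v, I v ω + 1) - (∑ v, I v ω : ℕ) * g (∑ v, I v ω)) ∂μ| ≤
      D * ∑ v, p v ^ 2 := by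
  rw [integral_stein_bernoulli_sum hmeas h01 hindep hmean, mul_sum]
  refine (abs_sum_le_sum_abs _ _).trans (sum_le_sum fun v _ => ?_)
  rw [abs_mul, abs_sq, mul_comm D]
  gcongr
  simpa using norm_integral_le_of_norm_le_const (μ := μ) (ae_of_all _ fun ω =>
    (Real.norm_eq_abs _).trans_le (hg _ (Nat.le_add_left 1 _)))

end BernoulliSum

/-- total-variation Poisson approximation
`d_TV(L(W), Po(λ)) ≤ min(1, 1/λ) · λ₂` for a sum `W` of independent Bernoulli
random variables, where `d_TV(μ,ν) = sup_{A⊆ℕ} |μ(A) − ν(A)|`. -/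
theorem bernoulli_sum_total_variation_poisson
    {Ω : Type*} [MeasurableSpace Ω] (μ : Measure Ω) [IsProbabilityMeasure μ]
    {V : Type*} [Fintype V]
    (I : V → Ω → ℕ) (p : V → ℝ)
    (hmeas : ∀ v, Measurable (I v))
    (h01 : ∀ v ω, I v ω = 0 ∨ I v ω = 1)
    (hp01 : ∀ v, p v ∈ Set.Icc (0 : ℝ) 1)
    (hbern : ∀ v, μ {ω | I v ω = 1} = ENNReal.ofReal (p v))
    (hindep : iIndepFun I μ)
    (lam lam2 : ℝ) (hlam : lam = ∑ v, p v) (hlampos : 0 < lam)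
    (hlam2 : lam2 = ∑ v, (p v) ^ 2) :
    (⨆ A : Set ℕ,
        |((μ.map (fun ω => ∑ v, I v ω)) A).toReal - poissonProb lam A|) ≤
      min 1 (1 / lam) * lam2 := by
  classical
  have hmean (v : V) : ∫ ω, (I v ω : ℝ) ∂μ = p v :=
    integral_natCast_eq_of_bernoulli (hmeas v) (h01 v) (hp01 v).1 (hbern v)
  refine ciSup_le fun A => ?_
  have hbound := abs_integral_stein_bernoulli_sum_le hmeas h01 hindep hmean
    fun k hk => abs_poissonSteinSolution_succ_sub_le hlampos A hk
  rw [← hlam, ← hlam2] at hbound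
  rw [toReal_map_apply_sub_eq_integral (Finset.measurable_sum univ fun v _ => hmeas v)]
  simp_rw [← poissonSteinSolution_spec hlampos A]
  exact hbound.trans (mul_le_mul_of_nonneg_right (one_sub_exp_neg_div_le_min hlampos)
    (hlam2 ▸ sum_nonneg fun v _ => sq_nonneg (p v)))
end
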